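/- arXiv:1905.10766 — 6 statements merged into one kernel-verified Lean document; each statement's English description precedes it below -/
import Mathlib

section
/- Let κ, β be real numbers with κβ < 0 and κ ≠ 0. Set ω = -κβ/(κ² + 1). Then ω > 0, and the function φ defined by φ(x) = e^{ωx} for x < 0 and φ(x) = κ e^{-ωx} for x > 0 satisfies: φ is square-integrable on ℝ, -φ'' = Eφ on ℝ \ {0} with E = -(κβ/(κ²+1))², and the coupling conditions φ(0+) = κ φ(0-) and φ'(0+) = β φ(0-) + κ⁻¹ φ'(0-). -/
open MeasureTheory Filter Set
open scoped Topology

private lemma hasDerivAt_exp_mul (c x : ℝ) :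
    HasDerivAt (fun y : ℝ => Real.exp (c * y)) (c * Real.exp (c * x)) x := by
  have h := ((hasDerivAt_id x).const_mul c).exp
  simpa [mul_comm] using h

private lemma integrableOn_exp_mul_Iio {c : ℝ} (hc : 0 < c) :
    IntegrableOn (fun x : ℝ => Real.exp (c * x)) (Iio (0 : ℝ)) volume := by
  have A : MeasurableEmbedding (fun x : ℝ => -x) :=
    (Homeomorph.neg ℝ).isClosedEmbedding.measurableEmbedding
  have key := A.integrableOn_map_iff (f := fun x : ℝ => Real.exp (c * x))
    (s := Iio (0:ℝ)) (μ := (volume : Measure ℝ))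
  rw [Measure.map_neg_eq_self (volume : Measure ℝ)] at key
  rw [key]
  have hpre : (fun x : ℝ => -x) ⁻¹' Iio (0 : ℝ) = Ioi (0 : ℝ) := by ext x; simp
  rw [hpre]
  have h : IntegrableOn (fun x : ℝ => Real.exp (-c * x)) (Ioi (0 : ℝ)) volume :=
    exp_neg_integrableOn_Ioi 0 hc
  apply h.congr_fun _ measurableSet_Ioi
  intro x _
  simp [Function.comp, neg_mul, mul_neg]

/-- Eigenfunction of the point interaction operator H(κ,β) for κβ < 0. -/
theorem stmt_0 (κ β ω E : ℝ) (hκ : κ ≠ 0) (hκβ : κ * β < 0)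
    (hω : ω = -(κ * β) / (κ ^ 2 + 1))
    (hE : E = -(κ * β / (κ ^ 2 + 1)) ^ 2)
    (φ : ℝ → ℝ)
    (hφneg : ∀ x < (0 : ℝ), φ x = Real.exp (ω * x))
    (hφpos : ∀ x > (0 : ℝ), φ x = κ * Real.exp (-ω * x)) :
    0 < ω ∧
    MemLp φ 2 volume ∧
    (∀ x : ℝ, x ≠ 0 → -(deriv (deriv φ) x) = E * φ x) ∧
    ∃ m p m' p' : ℝ,
      Tendsto φ (𝓝[<] 0) (𝓝 m) ∧ Tendsto φ (𝓝[>] 0) (𝓝 p) ∧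
      Tendsto (deriv φ) (𝓝[<] 0) (𝓝 m') ∧ Tendsto (deriv φ) (𝓝[>] 0) (𝓝 p') ∧
      p = κ * m ∧ p' = β * m + κ⁻¹ * m' := by
  have hden : (0:ℝ) < κ ^ 2 + 1 := by positivity
  have hω0 : 0 < ω := by rw [hω]; exact div_pos (by linarith) hden
  have hEω : E = -ω ^ 2 := by rw [hE, hω]; ring
  have hωeq : ω * (κ ^ 2 + 1) = -(κ * β) := by
    rw [hω]; field_simp
  -- first derivatives
  have hd1neg : ∀ x < (0:ℝ), deriv φ x = ω * Real.exp (ω * x) := by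
    intro x hx
    have hev : φ =ᶠ[𝓝 x] fun y => Real.exp (ω * y) := by
      filter_upwards [Iio_mem_nhds hx] with y hy using hφneg y hy
    rw [hev.deriv_eq, (hasDerivAt_exp_mul ω x).deriv]
  have hd1pos : ∀ x > (0:ℝ), deriv φ x = -(κ * ω) * Real.exp (-ω * x) := by
    intro x hx
    have hev : φ =ᶠ[𝓝 x] fun y => κ * Real.exp (-ω * y) := by
      filter_upwards [Ioi_mem_nhds hx] with y hy using hφpos y hy
    rw [hev.deriv_eq, ((hasDerivAt_exp_mul (-ω) x).const_mul κ).deriv]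
    ring
  -- second derivatives
  have hd2neg : ∀ x < (0:ℝ), deriv (deriv φ) x = ω ^ 2 * Real.exp (ω * x) := by
    intro x hx
    have hev : deriv φ =ᶠ[𝓝 x] fun y => ω * Real.exp (ω * y) := by
      filter_upwards [Iio_mem_nhds hx] with y hy using hd1neg y hy
    rw [hev.deriv_eq, ((hasDerivAt_exp_mul ω x).const_mul ω).deriv]
    ring
  have hd2pos : ∀ x > (0:ℝ), deriv (deriv φ) x = κ * ω ^ 2 * Real.exp (-ω * x) := by
    intro x hx
    have hev : deriv φ =ᶠ[𝓝 x] fun y => -(κ * ω) * Real.exp (-ω * y) := by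
      filter_upwards [Ioi_mem_nhds hx] with y hy using hd1pos y hy
    rw [hev.deriv_eq, ((hasDerivAt_exp_mul (-ω) x).const_mul (-(κ * ω))).deriv]
    ring
  refine ⟨hω0, ?_, ?_, 1, κ, ω, -(κ * ω), ?_, ?_, ?_, ?_, by ring, ?_⟩
  · -- Memℒp
    set g : ℝ → ℝ := fun x => if x < 0 then Real.exp (ω * x) else κ * Real.exp (-ω * x) with hg
    have hmg : Measurable g := by
      apply Measurable.ite measurableSet_Iio <;> fun_prop
    have hae : φ =ᵐ[volume] g := by
      rw [Filter.EventuallyEq, ae_iff]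
      refine measure_mono_null ?_ (measure_singleton (0:ℝ))
      intro x hx
      simp only [mem_setOf_eq] at hx
      simp only [mem_singleton_iff]
      by_contra h0
      rcases lt_or_gt_of_ne (h0 : x ≠ 0) with h | h
      · exact hx (by rw [hφneg x h, hg]; simp [h])
      · exact hx (by rw [hφpos x h, hg]; simp [not_lt.mpr h.le])
    refine MemLp.ae_eq hae.symm ?_
    rw [memLp_two_iff_integrable_sq hmg.aestronglyMeasurable]
    rw [← integrableOn_univ, ← Iio_union_Ici (a := (0:ℝ))]
    apply IntegrableOn.union
    · refine (integrableOn_exp_mul_Iio (c := 2 * ω) (by positivity)).congr_fun ?_ measurableSet_Iio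
      intro x hx
      rw [hg]
      simp only [if_pos (mem_Iio.mp hx)]
      rw [sq, ← Real.exp_add]; ring_nf
    · have hbase : IntegrableOn (fun x : ℝ => κ ^ 2 * Real.exp (-(2 * ω) * x)) (Ioi (0:ℝ)) volume :=
        (exp_neg_integrableOn_Ioi 0 (by positivity)).const_mul _
      refine ((integrableOn_Ici_iff_integrableOn_Ioi).mpr hbase).congr_fun ?_ measurableSet_Ici
      intro x hx
      rw [hg]
      simp only [if_neg (not_lt.mpr (mem_Ici.mp hx))]
      rw [mul_pow, sq (Real.exp _), ← Real.exp_add]; ring_nf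
  · -- eigen equation
    intro x hx
    rcases hx.lt_or_gt with h | h
    · rw [hd2neg x h, hφneg x h, hEω]; ring
    · rw [hd2pos x h, hφpos x h, hEω]; ring
  · -- φ → 1 from the left
    have hc : Continuous fun x : ℝ => Real.exp (ω * x) := by fun_prop
    have hcont : Tendsto (fun x : ℝ => Real.exp (ω * x)) (𝓝[<] (0:ℝ)) (𝓝 1) := by
      have h0 := hc.tendsto 0
      simp only [mul_zero, neg_zero, Real.exp_zero, mul_one] at h0
      exact h0.mono_left nhdsWithin_le_nhds
    exact Tendsto.congr' (eventually_nhdsWithin_of_forall fun x hx => (hφneg x hx).symm) hcont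
  · -- φ → κ from the right
    have hc : Continuous fun x : ℝ => κ * Real.exp (-ω * x) := by fun_prop
    have hcont : Tendsto (fun x : ℝ => κ * Real.exp (-ω * x)) (𝓝[>] (0:ℝ)) (𝓝 κ) := by
      have h0 := hc.tendsto 0
      simp only [mul_zero, neg_zero, Real.exp_zero, mul_one] at h0
      exact h0.mono_left nhdsWithin_le_nhds
    exact Tendsto.congr' (eventually_nhdsWithin_of_forall fun x hx => (hφpos x hx).symm) hcont
  · -- deriv φ → ω from the left
    have hc : Continuous fun x : ℝ => ω * Real.exp (ω * x) := by fun_prop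
    have hcont : Tendsto (fun x : ℝ => ω * Real.exp (ω * x)) (𝓝[<] (0:ℝ)) (𝓝 ω) := by
      have h0 := hc.tendsto 0
      simp only [mul_zero, neg_zero, Real.exp_zero, mul_one] at h0
      exact h0.mono_left nhdsWithin_le_nhds
    exact Tendsto.congr' (eventually_nhdsWithin_of_forall fun x hx => (hd1neg x hx).symm) hcont
  · -- deriv φ → -(κω) from the right
    have hc : Continuous fun x : ℝ => -(κ * ω) * Real.exp (-ω * x) := by fun_prop
    have hcont : Tendsto (fun x : ℝ => -(κ * ω) * Real.exp (-ω * x)) (𝓝[>] (0:ℝ)) (𝓝 (-(κ * ω))) := by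
      have h0 := hc.tendsto 0
      simp only [mul_zero, neg_zero, Real.exp_zero, mul_one] at h0
      exact h0.mono_left nhdsWithin_le_nhds
    exact Tendsto.congr' (eventually_nhdsWithin_of_forall fun x hx => (hd1pos x hx).symm) hcont
  · -- coupling for derivatives
    have h1 : β * 1 + κ⁻¹ * ω = -(κ * ω) := by
      field_simp
      linear_combination hωeq
    exact h1.symm
end

section
/- Let U : ℝ → ℝ be a bounded measurable function with support contained in (-b, b), and let h : ℝ → ℝ be a bounded, nontrivial solution of -h'' + Uh = 0 on ℝ. Then h is constant on (-∞, -b] and constant on [b, ∞); the limits h₋ = lim_{x→-∞} h(x) and h₊ = lim_{x→+∞} h(x) exist, and both h₋ and h₊ are nonzero. In particular, h ∉ L²(ℝ). -/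
open MeasureTheory Filter Set
open scoped Topology

/-- On a half-line where `U` vanishes, a bounded solution is constant and its
derivative vanishes. -/
lemma halfline_const (b C : ℝ) (U h h' : ℝ → ℝ)
    (hU0 : ∀ x, b ≤ x → U x = 0)
    (hd1 : ∀ x, HasDerivAt h (h' x) x)
    (hd2 : ∀ x, HasDerivAt h' (U x * h x) x)
    (hbdd : ∀ x, |h x| ≤ C) :
    (∀ x, b ≤ x → h x = h b) ∧ (∀ x, b ≤ x → h' x = 0) := by
  have hconv : Convex ℝ (Ici b) := convex_Ici b
  -- h' is constant on Ici b
  have hder : ∀ x ∈ Ici b, HasDerivWithinAt h' ((fun _ => (0:ℝ)) x) (Ici b) x := by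
    intro x hx
    have := (hd2 x).hasDerivWithinAt (s := Ici b)
    rwa [hU0 x hx, zero_mul] at this
  have hc1 : ∀ x, b ≤ x → h' x = h' b := by
    intro x hx
    have := hconv.norm_image_sub_le_of_norm_hasDerivWithin_le (C := 0) hder
      (fun y _ => by simp) self_mem_Ici hx
    rw [zero_mul] at this
    have : h' x - h' b = 0 := by
      have := norm_nonneg (h' x - h' b)
      have h2 := ‹‖h' x - h' b‖ ≤ 0›
      exact norm_eq_zero.mp (le_antisymm h2 this)
    linarith [this]
  -- h is affine on Ici b with slope h' b
  have haff : ∀ x, b ≤ x → h x = h b + h' b * (x - b) := by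
    intro x hx
    have hderg : ∀ y ∈ Ici b, HasDerivWithinAt (fun z => h z - h' b * z)
        ((fun _ => (0:ℝ)) y) (Ici b) y := by
      intro y hy
      have := ((hd1 y).sub ((hasDerivAt_id y).const_mul (h' b))).hasDerivWithinAt (s := Ici b)
      exact this.congr_deriv (by simp [hc1 y hy])
    have := hconv.norm_image_sub_le_of_norm_hasDerivWithin_le (C := 0) hderg
      (fun y _ => by simp) self_mem_Ici hx
    rw [zero_mul] at this
    have h0 : (h x - h' b * x) - (h b - h' b * b) = 0 := norm_eq_zero.mp
      (le_antisymm this (norm_nonneg _))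
    ring_nf
    ring_nf at h0
    linarith
  -- slope is zero by boundedness
  have hC0 : 0 ≤ C := le_trans (abs_nonneg _) (hbdd b)
  have hslope : h' b = 0 := by
    by_contra hne
    have habs : 0 < |h' b| := abs_pos.mpr hne
    set d : ℝ := (2 * C + 1) / |h' b| with hd
    have hd0 : 0 ≤ d := div_nonneg (by linarith) habs.le
    have hx : b ≤ b + d := by linarith
    have := haff (b + d) hx
    have hval : h' b * (b + d - b) = h (b + d) - h b := by linarith
    have h1 : |h' b * (b + d - b)| ≤ |h (b + d)| + |h b| := by
      rw [hval]
      exact abs_sub _ _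
    have h2 : |h' b * (b + d - b)| = 2 * C + 1 := by
      have : b + d - b = d := by ring
      rw [this, abs_mul, abs_of_nonneg hd0, hd]
      field_simp
    have := hbdd (b + d)
    have := hbdd b
    linarith
  refine ⟨fun x hx => by have := haff x hx; rw [hslope] at this; linarith,
    fun x hx => by rw [hc1 x hx, hslope]⟩

/-- Solutions of the linear second-order ODE are unique: if `h` and `h'` vanish at a
point, `h` vanishes everywhere. -/
lemma ode_zero (C : ℝ) (U h h' : ℝ → ℝ)
    (hUbd : ∀ x, |U x| ≤ C)
    (hd1 : ∀ x, HasDerivAt h (h' x) x)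
    (hd2 : ∀ x, HasDerivAt h' (U x * h x) x)
    (t₀ : ℝ) (h0 : h t₀ = 0) (h0' : h' t₀ = 0) : ∀ x, h x = 0 := by
  have hC0 : 0 ≤ C := le_trans (abs_nonneg _) (hUbd 0)
  set v : ℝ → ℝ × ℝ → ℝ × ℝ := fun t p => (p.2, U t * p.1) with hv_def
  set K : NNReal := Real.toNNReal (max 1 C) with hK
  have hKcoe : (K : ℝ) = max 1 C := Real.coe_toNNReal _ (le_trans zero_le_one (le_max_left _ _))
  have hv : ∀ t, LipschitzWith K (v t) := by
    intro t
    apply LipschitzWith.of_dist_le_mul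
    intro p q
    rw [Prod.dist_eq, Prod.dist_eq, hKcoe]
    simp only [Real.dist_eq, hv_def]
    have hd : 0 ≤ max |p.1 - q.1| |p.2 - q.2| := le_max_of_le_left (abs_nonneg _)
    apply max_le
    · calc |p.2 - q.2| ≤ max |p.1 - q.1| |p.2 - q.2| := le_max_right _ _
        _ ≤ max 1 C * max |p.1 - q.1| |p.2 - q.2| := by
            nlinarith [le_max_left 1 C]
    · have : |U t * p.1 - U t * q.1| = |U t| * |p.1 - q.1| := by
        rw [← mul_sub, abs_mul]
      rw [this]
      calc |U t| * |p.1 - q.1| ≤ C * max |p.1 - q.1| |p.2 - q.2| := by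
            have := hUbd t
            have := le_max_left |p.1 - q.1| |p.2 - q.2|
            nlinarith [abs_nonneg (U t), abs_nonneg (p.1 - q.1)]
        _ ≤ max 1 C * max |p.1 - q.1| |p.2 - q.2| := by
            nlinarith [le_max_right 1 C]
  set f : ℝ → ℝ × ℝ := fun t => (h t, h' t) with hf_def
  have hf' : ∀ t, HasDerivAt f (v t (f t)) t := fun t => (hd1 t).prodMk (hd2 t)
  have hfc : Continuous f := by
    rw [continuous_iff_continuousAt]
    exact fun t => (hf' t).continuousAt
  set g : ℝ → ℝ × ℝ := fun _ => (0 : ℝ × ℝ) with hg_def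
  have hg' : ∀ t, HasDerivAt g (v t (g t)) t := by
    intro t
    have : v t (g t) = 0 := by simp [hv_def, hg_def]
    rw [this]
    exact hasDerivAt_const t 0
  have hfg : f t₀ = g t₀ := by simp [hf_def, hg_def, h0, h0']
  intro x
  rcases le_total t₀ x with hx | hx
  · have := ODE_solution_unique_of_mem_Icc_right (v := v) (s := fun _ => univ)
      (fun t _ => (hv t).lipschitzOnWith (s := univ))
      (hfc.continuousOn) (fun t _ => (hf' t).hasDerivWithinAt)
      (fun t _ => mem_univ _)
      (continuous_const.continuousOn) (fun t _ => (hg' t).hasDerivWithinAt)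
      (fun t _ => mem_univ _) hfg (right_mem_Icc.mpr hx)
    have : h x = 0 := congrArg Prod.fst this
    exact this
  · have := ODE_solution_unique_of_mem_Icc_left (v := v) (s := fun _ => univ)
      (fun t _ => (hv t).lipschitzOnWith (s := univ))
      (hfc.continuousOn) (fun t _ => (hf' t).hasDerivWithinAt)
      (fun t _ => mem_univ _)
      (continuous_const.continuousOn) (fun t _ => (hg' t).hasDerivWithinAt)
      (fun t _ => mem_univ _) hfg (left_mem_Icc.mpr hx)
    have : h x = 0 := congrArg Prod.fst this
    exact this

/-- A half-bound state (bounded nontrivial solution of -h'' + Uh = 0 with U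
compactly supported in (-b,b)) is constant on each of the two half-lines, has
nonzero limits at ±∞, and is not square integrable. -/
theorem stmt_3 (b : ℝ) (hb : 0 < b) (U h h' : ℝ → ℝ)
    (hUm : Measurable U) (hUbd : ∃ C, ∀ x, |U x| ≤ C)
    (hUsupp : Function.support U ⊆ Ioo (-b) b)
    (hd1 : ∀ x, HasDerivAt h (h' x) x)
    (hd2 : ∀ x, HasDerivAt h' (U x * h x) x)
    (hbdd : ∃ C, ∀ x, |h x| ≤ C)
    (hnt : h ≠ 0) :
    (∀ x ≤ -b, h x = h (-b)) ∧ (∀ x ≥ b, h x = h b) ∧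
    Tendsto h atBot (𝓝 (h (-b))) ∧ Tendsto h atTop (𝓝 (h b)) ∧
    h (-b) ≠ 0 ∧ h b ≠ 0 ∧ ¬ MemLp h 2 volume := by
  obtain ⟨CU, hCU⟩ := hUbd
  obtain ⟨C, hC⟩ := hbdd
  have hU0 : ∀ x, x ∉ Ioo (-b) b → U x = 0 := by
    intro x hx
    by_contra hne
    exact hx (hUsupp hne)
  -- right half-line
  have hR := halfline_const b C U h h' (fun x hx => hU0 x (by simp [hx.not_gt]))
    hd1 hd2 hC
  -- left half-line, by reflection
  have hL : (∀ x, b ≤ x → h (-x) = h b ∨ True) := fun _ _ => Or.inr trivial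
  have hLr := halfline_const b C (fun x => U (-x)) (fun x => h (-x)) (fun x => -h' (-x))
    (fun x hx => hU0 (-x) (fun hmem => by
      have := hmem.1; simp at this; linarith [hmem.1]))
    (fun x => by
      have := (hd1 (-x)).comp x (hasDerivAt_neg x)
      simpa [mul_comm, Function.comp_def] using this)
    (fun x => by
      have := (hd2 (-x)).comp x (hasDerivAt_neg x)
      have h2 : HasDerivAt (fun y => h' (-y)) (U (-x) * h (-x) * (-1)) x := this
      have := h2.neg
      exact this.congr_deriv (by ring))
    (fun x => hC (-x))
  have hleft : ∀ x ≤ -b, h x = h (-b) := by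
    intro x hx
    have := hLr.1 (-x) (by linarith)
    simpa using this
  have hright : ∀ x ≥ b, h x = h b := fun x hx => hR.1 x hx
  -- limits
  have htop : Tendsto h atTop (𝓝 (h b)) := by
    apply Tendsto.congr' _ tendsto_const_nhds
    filter_upwards [eventually_ge_atTop b] with x hx
    exact (hright x hx).symm
  have hbot : Tendsto h atBot (𝓝 (h (-b))) := by
    apply Tendsto.congr' _ tendsto_const_nhds
    filter_upwards [eventually_le_atBot (-b)] with x hx
    exact (hleft x hx).symm
  -- nonvanishing
  have hbne : h b ≠ 0 := by
    intro h0
    have h0' : h' b = 0 := hR.2 b le_rfl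
    exact hnt (funext (ode_zero CU U h h' hCU hd1 hd2 b h0 h0'))
  have hmbne : h (-b) ≠ 0 := by
    intro h0
    have h0' : h' (-b) = 0 := by
      have := hLr.2 b le_rfl
      simpa using this
    exact hnt (funext (ode_zero CU U h h' hCU hd1 hd2 (-b) h0 h0'))
  -- not L²
  have hnotL2 : ¬ MemLp h 2 volume := by
    intro hmem
    have hε : ‖h b‖₊ ≠ 0 := by simpa using hbne
    have hfin := hmem.meas_ge_lt_top (two_ne_zero) (by norm_num) hε
    have hsub : Ici b ⊆ {x | ‖h b‖₊ ≤ ‖h x‖₊} := by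
      intro x hx
      simp only [mem_setOf_eq, hright x hx]
      exact le_rfl
    have : volume (Ici b) ≤ volume {x | ‖h b‖₊ ≤ ‖h x‖₊} := measure_mono hsub
    rw [Real.volume_Ici] at this
    exact (lt_irrefl ⊤ (lt_of_le_of_lt this hfin)).elim
  exact ⟨hleft, hright, hbot, htop, hmbne, hbne, hnotL2⟩
end

section
/- Let U, V : ℝ → ℝ be bounded with support in (-b,b), and let u be a solution of -u'' + Uu = 0 on (-b,b) with u'(-b) = 0, u'(b) = 0, u(-b) = 1, u(b) = θ. If v solves -v'' + Uv = -Wu on (-b,b) with v(-b) = 0 and v'(-b) = 0, where W is bounded with support in (-b,b), then θ v'(b) = ∫_{-b}^{b} W u² dx. -/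
open MeasureTheory Filter Set
open scoped Topology

/-- The key integration-by-parts identity: if u is the normalized half-bound state
(Neumann solution of -u''+Uu=0 on (-b,b) with u(-b)=1, u(b)=θ) and v solves
-v''+Uv = -Wu with v(-b)=v'(-b)=0, then θ v'(b) = ∫ W u². -/
theorem stmt_4 (b θ : ℝ) (hb : 0 < b)
    (U W u u' v v' : ℝ → ℝ)
    (hUm : Measurable U) (hUbd : ∃ C, ∀ x, |U x| ≤ C)
    (hUsupp : Function.support U ⊆ Ioo (-b) b)
    (hWm : Measurable W) (hWbd : ∃ C, ∀ x, |W x| ≤ C)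
    (hWsupp : Function.support W ⊆ Ioo (-b) b)
    (hu1 : ∀ x ∈ Icc (-b) b, HasDerivAt u (u' x) x)
    (hu2 : ∀ x ∈ Icc (-b) b, HasDerivAt u' (U x * u x) x)
    (huNm : u' (-b) = 0) (huNp : u' b = 0)
    (hum : u (-b) = 1) (hup : u b = θ)
    (hv1 : ∀ x ∈ Icc (-b) b, HasDerivAt v (v' x) x)
    (hv2 : ∀ x ∈ Icc (-b) b, HasDerivAt v' (U x * v x + W x * u x) x)
    (hvm : v (-b) = 0) (hvm' : v' (-b) = 0) :
    θ * v' b = ∫ x in (-b)..b, W x * (u x) ^ 2 := by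
  have hble : -b ≤ b := by linarith
  have hucont : ContinuousOn u (Icc (-b) b) := fun x hx =>
    ((hu1 x hx).continuousAt).continuousWithinAt
  have hWint : IntervalIntegrable W volume (-b) b := by
    obtain ⟨C, hC⟩ := hWbd
    rw [intervalIntegrable_iff_integrableOn_Ioc_of_le hble]
    apply MeasureTheory.Integrable.mono' (g := fun _ => C)
      (integrableOn_const measure_Ioc_lt_top.ne)
    · exact hWm.aestronglyMeasurable.restrict
    · exact Filter.Eventually.of_forall fun x => hC x
  have hint : IntervalIntegrable (fun x => W x * u x ^ 2) volume (-b) b := by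
    apply hWint.mul_continuousOn
    rw [uIcc_of_le hble]
    exact hucont.pow 2
  have key : ∀ x ∈ uIcc (-b) b,
      HasDerivAt (fun y => u y * v' y - u' y * v y) (W x * u x ^ 2) x := by
    intro x hx
    rw [uIcc_of_le hble] at hx
    have h := ((hu1 x hx).mul (hv2 x hx)).sub ((hu2 x hx).mul (hv1 x hx))
    exact h.congr_deriv (by ring)
  have hFTC := intervalIntegral.integral_eq_sub_of_hasDerivAt key hint
  rw [hFTC, hup, huNp, hvm, hvm', hum, huNm]
  ring
end

section
/- Let V : ℝ → ℝ be bounded with support in (-b,b) and ∫_ℝ V dx = 0. Let g ∈ W²_{2,loc}(ℝ). Then as α → ∞, α ∫_ℝ αV(αx) g(x) dx = g'(0) ∫_ℝ x V(x) dx + o(α^{-1/2}). -/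
open MeasureTheory Filter Set
open scoped Topology Interval

theorem helper_int {f : ℝ → ℝ} {b M : ℝ} (hm : AEStronglyMeasurable f volume)
    (hsupp : Function.support f ⊆ Ioo (-b) b) (hbd : ∀ x ∈ Ioo (-b) b, |f x| ≤ M) :
    Integrable f := by
  rw [← integrableOn_iff_integrable_of_support_subset hsupp]
  refine Integrable.mono' (g := fun _ => M)
    (integrableOn_const measure_Ioo_lt_top.ne) hm.restrict ?_
  refine (ae_restrict_iff' measurableSet_Ioo).2 (ae_of_all _ fun x hx => ?_)
  simpa using hbd x hx

theorem helper_subst (V : ℝ → ℝ) (α : ℝ) (hα : 0 < α) (g : ℝ → ℝ) :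
    ∫ x : ℝ, α * (V (α * x) * g x) = ∫ t : ℝ, V t * g (t / α) := by
  have h := MeasureTheory.Measure.integral_comp_mul_left (fun t => V t * g (t / α)) α
  simp only [mul_div_assoc, mul_div_cancel_left₀ _ hα.ne'] at h
  rw [integral_const_mul, h, abs_of_pos (inv_pos.2 hα), smul_eq_mul, ← mul_assoc,
    mul_inv_cancel₀ hα.ne', one_mul]

theorem helper_cs (f : ℝ → ℝ) (hm : Measurable f) (s : Set ℝ)
    (hfin : volume s ≠ ⊤) (hsq : IntegrableOn (fun x => f x ^ 2) s) :
    ∫ x in s, |f x| ≤ Real.sqrt ((volume s).toReal) * Real.sqrt (∫ x in s, f x ^ 2) := by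
  haveI : IsFiniteMeasure (volume.restrict s) :=
    ⟨by rw [Measure.restrict_apply_univ]; exact hfin.lt_top⟩
  have hpq : Real.HolderConjugate 2 2 := Real.holderConjugate_iff.mpr ⟨by norm_num, by norm_num⟩
  have hmem : MemLp (fun x => |f x|) (ENNReal.ofReal 2) (volume.restrict s) := by
    rw [show ENNReal.ofReal 2 = 2 by norm_num]
    refine (memLp_two_iff_integrable_sq hm.abs.aestronglyMeasurable.restrict).2 ?_
    simpa [sq_abs, IntegrableOn] using hsq
  have hmem1 : MemLp (fun _ : ℝ => (1:ℝ)) (ENNReal.ofReal 2) (volume.restrict s) :=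
    memLp_const 1
  have h := integral_mul_le_Lp_mul_Lq_of_nonneg hpq
    (ae_of_all _ fun x => abs_nonneg (f x)) (ae_of_all _ fun _ => zero_le_one) hmem hmem1
  simp only [mul_one, one_pow] at h
  calc ∫ x in s, |f x|
      ≤ (∫ x in s, |f x| ^ (2:ℝ)) ^ ((1:ℝ)/2) * (∫ x in s, (1:ℝ) ^ (2:ℝ)) ^ ((1:ℝ)/2) := by
        convert h using 3 <;> norm_num
    _ = Real.sqrt ((volume s).toReal) * Real.sqrt (∫ x in s, f x ^ 2) := by
        rw [mul_comm]
        congr 1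
        · rw [Real.sqrt_eq_rpow]
          congr 1
          simp [setIntegral_const, measureReal_def]
        · rw [Real.sqrt_eq_rpow]
          congr 1
          refine integral_congr_ae (ae_of_all _ fun x => ?_)
          show |f x| ^ (2:ℝ) = f x ^ 2
          rw [show ((2:ℝ)) = ((2:ℕ):ℝ) by norm_num, Real.rpow_natCast, sq_abs]

theorem helper_uIoc {x t : ℝ} (ht : t ∈ Ι (0:ℝ) x) : |t| ≤ |x| := by
  have h3 : t ∈ Icc (min 0 x) (max 0 x) := Ioc_subset_Icc_self ht
  rw [abs_le]
  constructor
  · exact le_trans (le_min (neg_nonpos_of_nonneg (abs_nonneg x)) (neg_abs_le x)) h3.1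
  · exact le_trans h3.2 (max_le (abs_nonneg x) (le_abs_self x))

/-- Proposition PropIntVlmAsympt: for V bounded with support in (-b,b), ∫V = 0,
and g ∈ W²_{2,loc}(ℝ) (g' absolutely continuous with locally L² density g''),
α ∫ αV(αx) g(x) dx = g'(0) ∫ xV(x) dx + o(α^{-1/2}) as α → ∞. -/
theorem stmt_7 (b : ℝ) (hb : 0 < b) (V g g' g'' : ℝ → ℝ)
    (hVm : Measurable V) (hVbd : ∃ C, ∀ x, |V x| ≤ C)
    (hVsupp : Function.support V ⊆ Ioo (-b) b)
    (hV0 : ∫ x, V x = 0)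
    (hg : ∀ x, HasDerivAt g (g' x) x)
    (hg''m : Measurable g'')
    (hFTC : ∀ x, g' x = g' 0 + ∫ t in (0:ℝ)..x, g'' t)
    (hloc : ∀ R > (0:ℝ), IntegrableOn (fun x => (g'' x) ^ 2) (Icc (-R) R)) :
    (fun α : ℝ => α * (∫ x, α * V (α * x) * g x) - g' 0 * ∫ x, x * V x)
      =o[atTop] (fun α : ℝ => α ^ (-(1/2) : ℝ)) := by
  obtain ⟨C₀, hC₀⟩ := hVbd
  set C := max C₀ 0 with hCdef
  have hCnn : 0 ≤ C := le_max_right _ _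
  have hVC : ∀ x, |V x| ≤ C := fun x => (hC₀ x).trans (le_max_left _ _)
  have hgc : Continuous g := by
    rw [continuous_iff_continuousAt]; exact fun x => (hg x).continuousAt
  have hsqInt : ∀ a c : ℝ, IntegrableOn (fun x => (g'' x) ^ 2) (uIcc a c) := by
    intro a c
    set R : ℝ := max (max |a| |c|) 1 with hRdef
    have hR1 : (0:ℝ) < R := lt_of_lt_of_le one_pos (le_max_right _ _)
    have haR : |a| ≤ R := le_trans (le_max_left _ _) (le_max_left _ _)
    have hcR : |c| ≤ R := le_trans (le_max_right _ _) (le_max_left _ _)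
    rw [abs_le] at haR hcR
    have hsub : uIcc a c ⊆ Icc (-R) R := uIcc_subset_Icc ⟨haR.1, haR.2⟩ ⟨hcR.1, hcR.2⟩
    exact (hloc R hR1).mono_set hsub
  have hg''abs : ∀ a c : ℝ, IntegrableOn g'' (uIcc a c) := by
    intro a c
    have h1 : IntegrableOn (fun x => (g'' x)^2 + 1) (uIcc a c) :=
      (hsqInt a c).add (integrableOn_const measure_Icc_lt_top.ne)
    refine h1.mono' hg''m.aestronglyMeasurable.restrict (ae_of_all _ fun x => ?_)
    rw [Real.norm_eq_abs]
    nlinarith [abs_nonneg (g'' x), sq_abs (g'' x)]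
  have hg''ii : ∀ a c : ℝ, IntervalIntegrable g'' volume a c := fun a c =>
    (hg''abs a c).intervalIntegrable
  have hsqii : ∀ a c : ℝ, IntervalIntegrable (fun x => (g'' x)^2) volume a c := fun a c =>
    (hsqInt a c).intervalIntegrable
  have hg'c : Continuous g' := by
    have : Continuous fun x => g' 0 + ∫ t in (0:ℝ)..x, g'' t :=
      continuous_const.add (intervalIntegral.continuous_primitive hg''ii 0)
    exact this.congr fun x => (hFTC x).symm
  set β : ℝ → ℝ := fun y => g y - g 0 - g' 0 * y with hβdef
  have hβc : Continuous β := (hgc.sub continuous_const).sub (continuous_const.mul continuous_id)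
  have hβeq : ∀ x : ℝ, β x = ∫ t in (0:ℝ)..x, (g' t - g' 0) := by
    intro x
    have hd : ∀ t ∈ uIcc (0:ℝ) x, HasDerivAt (fun y => g y - g 0 - g' 0 * y) (g' t - g' 0) t := by
      intro t _
      have h0 : HasDerivAt (fun y : ℝ => g' 0 * y) (g' 0) t := by
        simpa using (hasDerivAt_id t).const_mul (g' 0)
      exact ((hg t).sub_const (g 0)).sub h0
    have hi : IntervalIntegrable (fun t => g' t - g' 0) volume 0 x :=
      (hg'c.sub continuous_const).intervalIntegrable 0 x
    have h2 := intervalIntegral.integral_eq_sub_of_hasDerivAt hd hi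
    simp only [mul_zero, sub_zero] at h2
    rw [h2]; simp [hβdef]
  set ε : ℝ → ℝ := fun δ => Real.sqrt (∫ t in Icc (-δ) δ, (g'' t)^2) with hεdef
  have hεnn : ∀ δ, 0 ≤ ε δ := fun δ => Real.sqrt_nonneg _
  have hCS : ∀ δ > (0:ℝ), ∀ t : ℝ, |t| ≤ δ → |g' t - g' 0| ≤ Real.sqrt δ * ε δ := by
    intro δ hδ t ht
    have h1 : g' t - g' 0 = ∫ s in (0:ℝ)..t, g'' s := by rw [hFTC t]; ring
    rw [h1]
    have h2 : |∫ s in (0:ℝ)..t, g'' s| ≤ ∫ s in Ι (0:ℝ) t, |g'' s| := by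
      simpa [Real.norm_eq_abs] using
        intervalIntegral.norm_integral_le_integral_norm_uIoc (f := g'') (a := (0:ℝ)) (b := t)
          (μ := volume)
    have hΙsub : Ι (0:ℝ) t ⊆ Icc (-δ) δ := fun s hs => by
      have := (helper_uIoc hs).trans ht
      rw [abs_le] at this; exact ⟨this.1, this.2⟩
    have h3 := helper_cs g'' hg''m (Ι (0:ℝ) t) (by rw [Set.uIoc]; exact measure_Ioc_lt_top.ne)
      ((hsqInt 0 t).mono_set Ioc_subset_Icc_self)
    have hvol : Real.sqrt ((volume (Ι (0:ℝ) t)).toReal) ≤ Real.sqrt δ := by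
      apply Real.sqrt_le_sqrt
      rw [Set.uIoc, Real.volume_Ioc, ENNReal.toReal_ofReal (by simp [max_sub_min_eq_abs])]
      rw [max_sub_min_eq_abs]
      simpa using ht
    have hmono : ∫ s in Ι (0:ℝ) t, (g'' s)^2 ≤ ∫ s in Icc (-δ) δ, (g'' s)^2 := by
      apply setIntegral_mono_set (hloc δ hδ) (ae_of_all _ fun s => sq_nonneg _)
      exact HasSubset.Subset.eventuallyLE hΙsub
    have h4 : Real.sqrt (∫ s in Ι (0:ℝ) t, (g'' s)^2) ≤ ε δ := Real.sqrt_le_sqrt hmono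
    calc |∫ s in (0:ℝ)..t, g'' s| ≤ ∫ s in Ι (0:ℝ) t, |g'' s| := h2
      _ ≤ Real.sqrt ((volume (Ι (0:ℝ) t)).toReal) * Real.sqrt (∫ s in Ι (0:ℝ) t, (g'' s)^2) := h3
      _ ≤ Real.sqrt δ * ε δ := by
          apply mul_le_mul hvol h4 (Real.sqrt_nonneg _) (Real.sqrt_nonneg _)
  have hβbd : ∀ δ > (0:ℝ), ∀ x : ℝ, |x| ≤ δ → |β x| ≤ δ * (Real.sqrt δ * ε δ) := by
    intro δ hδ x hx
    rw [hβeq x]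
    have h1 : ∀ t ∈ Ι (0:ℝ) x, ‖g' t - g' 0‖ ≤ Real.sqrt δ * ε δ := fun t ht =>
      hCS δ hδ t ((helper_uIoc ht).trans hx)
    have h2 := intervalIntegral.norm_integral_le_of_norm_le_const h1
    rw [Real.norm_eq_abs] at h2
    calc |∫ t in (0:ℝ)..x, (g' t - g' 0)| ≤ Real.sqrt δ * ε δ * |x - 0| := h2
      _ ≤ δ * (Real.sqrt δ * ε δ) := by
          rw [sub_zero, mul_comm]
          exact mul_le_mul_of_nonneg_right hx (by positivity)
  -- ε (b/α) → 0
  have hεto : Tendsto (fun α : ℝ => ε (b / α)) atTop (𝓝 0) := by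
    set F : ℝ → ℝ := fun x => ∫ t in (0:ℝ)..x, (g'' t)^2 with hF
    have hFc : Continuous F := intervalIntegral.continuous_primitive hsqii 0
    have hGc : Continuous fun δ : ℝ => Real.sqrt (F δ - F (-δ)) :=
      ((hFc.sub (hFc.comp continuous_neg)).sqrt)
    have hb0 : Tendsto (fun α : ℝ => b / α) atTop (𝓝 0) :=
      tendsto_const_nhds.div_atTop tendsto_id
    have hlim : Tendsto (fun α : ℝ => Real.sqrt (F (b/α) - F (-(b/α)))) atTop (𝓝 0) := by
      have := (hGc.tendsto 0).comp hb0
      simpa [hF, Function.comp_def] using this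
    refine Tendsto.congr' ?_ hlim
    filter_upwards [eventually_gt_atTop 0] with α hα
    have hδ : 0 ≤ b / α := le_of_lt (div_pos hb hα)
    have hadd := intervalIntegral.integral_add_adjacent_intervals
      (hsqii 0 (-(b/α))) (hsqii (-(b/α)) (b/α))
    have : F (b/α) - F (-(b/α)) = ∫ t in (-(b/α))..(b/α), (g'' t)^2 := by
      simp only [hF]; linarith [hadd]
    rw [this, hεdef]
    have hle : -(b/α) ≤ b/α := by linarith
    rw [intervalIntegral.integral_of_le hle, ← integral_Icc_eq_integral_Ioc]
  -- basic integrability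
  have hVint : Integrable V := helper_int hVm.aestronglyMeasurable hVsupp fun x _ => hVC x
  have hxVm : Measurable fun x => x * V x := measurable_id.mul hVm
  have hxVsupp : Function.support (fun x => x * V x) ⊆ Ioo (-b) b := fun x hx =>
    hVsupp (Function.mem_support.2 (right_ne_zero_of_mul (Function.mem_support.1 hx)))
  have hxVint : Integrable fun x => x * V x := by
    refine helper_int (M := b * C) hxVm.aestronglyMeasurable hxVsupp fun x hx => ?_
    rw [abs_mul]
    have h1 : |x| ≤ b := by
      rw [abs_le]; exact ⟨hx.1.le, hx.2.le⟩
    exact mul_le_mul h1 (hVC x) (abs_nonneg _) hb.le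
  -- key quantitative bound
  have key : ∀ α : ℝ, 1 ≤ α →
      |α * (∫ x, α * V (α * x) * g x) - g' 0 * ∫ x, x * V x|
        ≤ (2 * C * b^2 * Real.sqrt b) * ε (b/α) * α ^ (-(1/2):ℝ) := by
    intro α hα1
    have hα : (0:ℝ) < α := lt_of_lt_of_le one_pos hα1
    set δ : ℝ := b / α with hδdef
    have hδpos : 0 < δ := div_pos hb hα
    have e1 : ∫ x, α * V (α * x) * g x = ∫ t, V t * g (t / α) := by
      simp only [mul_assoc]
      exact helper_subst V α hα g
    have hβcα : Continuous fun t : ℝ => β (t / α) := hβc.comp (continuous_id.div_const α)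
    have hVβsupp : Function.support (fun t => V t * β (t / α)) ⊆ Ioo (-b) b := fun x hx =>
      hVsupp (Function.mem_support.2 (left_ne_zero_of_mul (Function.mem_support.1 hx)))
    have hβbdα : ∀ t ∈ Ioo (-b) b, |β (t / α)| ≤ δ * (Real.sqrt δ * ε δ) := by
      intro t ht
      apply hβbd δ hδpos
      have h1 : |t| ≤ b := abs_le.2 ⟨ht.1.le, ht.2.le⟩
      rw [abs_div, abs_of_pos hα]
      exact (div_le_div_iff_of_pos_right hα).2 h1
    have hVβbd : ∀ t ∈ Ioo (-b) b, |V t * β (t / α)| ≤ C * (δ * (Real.sqrt δ * ε δ)) := by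
      intro t ht
      rw [abs_mul]
      exact mul_le_mul (hVC t) (hβbdα t ht) (abs_nonneg _) hCnn
    have hVβint : Integrable fun t => V t * β (t / α) :=
      helper_int (hVm.aestronglyMeasurable.mul hβcα.aestronglyMeasurable) hVβsupp hVβbd
    have e2 : ∫ t, V t * g (t / α)
        = g 0 * (∫ t, V t) + (g' 0 / α) * (∫ t, t * V t) + ∫ t, V t * β (t / α) := by
      have hfun : (fun t => V t * g (t / α))
          = fun t => (g 0 * V t + (g' 0 / α) * (t * V t)) + V t * β (t / α) := by
        funext t; simp only [hβdef]; field_simp; ring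
      have i1 : Integrable (fun t : ℝ => g 0 * V t + (g' 0 / α) * (t * V t)) := by
        exact (hVint.const_mul _).add (hxVint.const_mul _)
      rw [hfun, integral_add i1 hVβint,
        integral_add (hVint.const_mul _) (hxVint.const_mul _),
        integral_const_mul, integral_const_mul]
    have e3 : α * (∫ x, α * V (α * x) * g x) - g' 0 * ∫ x, x * V x
        = α * ∫ t, V t * β (t / α) := by
      rw [e1, e2, hV0]
      field_simp
      ring
    have e4 : |∫ t, V t * β (t / α)| ≤ (C * (δ * (Real.sqrt δ * ε δ))) * (2 * b) := by
      have hset : ∫ t, V t * β (t / α) = ∫ t in Ioo (-b) b, V t * β (t / α) :=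
        (setIntegral_eq_integral_of_forall_compl_eq_zero fun x hx => by
          have : V x = 0 := by
            by_contra h
            exact hx (hVsupp (Function.mem_support.2 h))
          rw [this, zero_mul]).symm
      rw [hset]
      have h5 := norm_setIntegral_le_of_norm_le_const (μ := volume) (s := Ioo (-b) b)
        measure_Ioo_lt_top
        (C := C * (δ * (Real.sqrt δ * ε δ))) (f := fun t => V t * β (t / α))
        (fun x hx => by rw [Real.norm_eq_abs]; exact hVβbd x hx)
      rw [Real.norm_eq_abs, measureReal_def, Real.volume_Ioo, ENNReal.toReal_ofReal (by linarith)] at h5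
      calc |∫ t in Ioo (-b) b, V t * β (t / α)| ≤ C * (δ * (Real.sqrt δ * ε δ)) * (b - -b) := h5
        _ = C * (δ * (Real.sqrt δ * ε δ)) * (2 * b) := by ring
    have hδval : Real.sqrt δ = Real.sqrt b * α ^ (-(1/2):ℝ) := by
      rw [hδdef, Real.sqrt_div hb.le, Real.rpow_neg hα.le, ← Real.sqrt_eq_rpow, div_eq_mul_inv]
    rw [e3, abs_mul, abs_of_pos hα]
    calc α * |∫ t, V t * β (t / α)| ≤ α * ((C * (δ * (Real.sqrt δ * ε δ))) * (2 * b)) :=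
        mul_le_mul_of_nonneg_left e4 hα.le
      _ = (2 * C * b^2 * Real.sqrt b) * ε δ * α ^ (-(1/2):ℝ) := by
          rw [hδval, hδdef]
          field_simp
  -- conclude
  rw [Asymptotics.isLittleO_iff]
  intro c hc
  set K := 2 * C * b^2 * Real.sqrt b with hK
  have hKnn : 0 ≤ K := by positivity
  have hKc : (0:ℝ) < c / (K + 1) := by positivity
  have h1 : ∀ᶠ α : ℝ in atTop, ε (b/α) < c / (K + 1) := hεto.eventually (gt_mem_nhds hKc)
  filter_upwards [h1, eventually_ge_atTop (1:ℝ)] with α hε hα1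
  have hα : (0:ℝ) < α := lt_of_lt_of_le one_pos hα1
  have hr : (0:ℝ) < α ^ (-(1/2):ℝ) := Real.rpow_pos_of_pos hα _
  have h2 := key α hα1
  have h3 : K * ε (b/α) ≤ c := by
    have := mul_le_mul_of_nonneg_left hε.le hKnn
    have h4 : K * (c / (K+1)) ≤ c := by
      rw [mul_div_assoc']
      rw [div_le_iff₀ (by positivity)]
      nlinarith
    linarith
  rw [Real.norm_eq_abs, Real.norm_eq_abs, abs_of_pos hr]
  calc |α * (∫ x, α * V (α * x) * g x) - g' 0 * ∫ x, x * V x|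
      ≤ K * ε (b/α) * α ^ (-(1/2):ℝ) := h2
    _ ≤ c * α ^ (-(1/2):ℝ) := mul_le_mul_of_nonneg_right h3 hr.le
end

section
/- Let U, V : ℝ → ℝ be bounded with support in (-b,b), and suppose the supremum norms of V, of a bounded solution u of -u''+Uu=0, and of the fundamental solutions are fixed. For α ≥ 1 let v_α solve -v'' + Uv = -α²V(αx)u(x) on (-b,b) with v(-b) = 0, v'(-b) = k_α, where (k_α) is a bounded family. Then there is a constant c independent of α with ‖v_α‖_{C¹([-b,b])} ≤ c α. -/
open MeasureTheory Filter Set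
open scoped Topology

lemma bdd_intervalIntegrable {g : ℝ → ℝ} (hm : Measurable g) {C a b : ℝ}
    (hC : ∀ x ∈ Set.uIoc a b, |g x| ≤ C) : IntervalIntegrable g volume a b :=
  (intervalIntegrable_const (c := C)).mono_fun hm.aestronglyMeasurable
    ((ae_restrict_iff' measurableSet_uIoc).2 (.of_forall fun x hx => by
      simpa [Real.norm_eq_abs] using (hC x hx).trans (le_abs_self C)))

/-- Proposition PropV1V2Th3 (first bound): solutions v_α of
-v'' + Uv = -α²V(αx)u with v(-b)=0, v'(-b)=k_α (k_α bounded) satisfy a C¹ bound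
‖v_α‖_{C¹([-b,b])} ≤ cα uniformly for α ≥ 1. -/
theorem stmt_9 (b M : ℝ) (hb : 0 < b) (hM : 0 < M)
    (U V u u' : ℝ → ℝ) (k : ℝ → ℝ)
    (hUm : Measurable U) (hU : ∀ x, |U x| ≤ M)
    (hUsupp : Function.support U ⊆ Ioo (-b) b)
    (hVm : Measurable V) (hV : ∀ x, |V x| ≤ M)
    (hVsupp : Function.support V ⊆ Ioo (-b) b)
    (hu1 : ∀ x, HasDerivAt u (u' x) x)
    (hu2 : ∀ x, HasDerivAt u' (U x * u x) x)
    (hubd : ∀ x, |u x| ≤ M)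
    (hk : ∀ α, |k α| ≤ M)
    (v v' : ℝ → ℝ → ℝ)
    (hv1 : ∀ α ≥ (1:ℝ), ∀ x, HasDerivAt (v α) (v' α x) x)
    (hv2 : ∀ α ≥ (1:ℝ), ∀ x,
      HasDerivAt (v' α) (U x * v α x + α ^ 2 * V (α * x) * u x) x)
    (hvb : ∀ α ≥ (1:ℝ), v α (-b) = 0 ∧ v' α (-b) = k α) :
    ∃ c : ℝ, ∀ α ≥ (1:ℝ), ∀ x ∈ Icc (-b) b,
      |v α x| ≤ c * α ∧ |v' α x| ≤ c * α := by
  classical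
  have hE : (0:ℝ) < Real.exp (2*(1+M)*b) := Real.exp_pos _
  refine ⟨(M + 4*b^2*M^2) * Real.exp (2*(1+M)*b) + 2*b*M^2, ?_⟩
  intro α hα
  have hα0 : (0:ℝ) < α := by linarith
  obtain ⟨hvb0, hvb1⟩ := hvb α hα
  have hvc : Continuous (v α) :=
    continuous_iff_continuousAt.2 fun x => (hv1 α hα x).continuousAt
  have hv'c : Continuous (v' α) :=
    continuous_iff_continuousAt.2 fun x => (hv2 α hα x).continuousAt
  have huc : Continuous u :=
    continuous_iff_continuousAt.2 fun x => (hu1 x).continuousAt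
  -- the forcing term
  set f : ℝ → ℝ := fun s => α ^ 2 * V (α * s) * u s with hfdef
  have hfm : Measurable f :=
    (measurable_const.mul (hVm.comp (measurable_const_mul α))).mul huc.measurable
  have hfbd : ∀ s, |f s| ≤ α ^ 2 * M ^ 2 := by
    intro s
    have h1 : |f s| = α ^ 2 * |V (α * s)| * |u s| := by
      rw [hfdef]; rw [abs_mul, abs_mul, abs_of_nonneg (sq_nonneg α)]
    rw [h1]
    have := hV (α * s); have := hubd s
    have h2 : α ^ 2 * |V (α * s)| ≤ α ^ 2 * M :=
      mul_le_mul_of_nonneg_left (hV _) (sq_nonneg α)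
    calc α ^ 2 * |V (α * s)| * |u s| ≤ (α ^ 2 * M) * M := by
          apply mul_le_mul h2 (hubd s) (abs_nonneg _)
          positivity
      _ = α ^ 2 * M ^ 2 := by ring
  have hfint : ∀ a' b' : ℝ, IntervalIntegrable f volume a' b' := fun a' b' =>
    bdd_intervalIntegrable hfm (fun x _ => hfbd x)
  set P : ℝ → ℝ := fun x => ∫ s in (-b)..x, f s with hPdef
  have hPc : Continuous P := intervalIntegral.continuous_primitive (fun a' b' => hfint a' b') (-b)
  -- f vanishes outside (-b/α, b/α)
  have hf0 : ∀ s : ℝ, b / α ≤ |s| → f s = 0 := by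
    intro s hs
    have hV0 : V (α * s) = 0 := by
      by_contra h
      have hmem := hVsupp (Function.mem_support.2 h)
      have h1 : |α * s| < b := abs_lt.2 ⟨hmem.1, hmem.2⟩
      rw [abs_mul, abs_of_pos hα0] at h1
      have : |s| < b / α := (lt_div_iff₀' hα0).2 h1
      linarith
    simp [hfdef, hV0]
  -- bound for P
  have hba : 0 < b / α := div_pos hb hα0
  have hbale : b / α ≤ b := by
    rw [div_le_iff₀ hα0]; nlinarith
  have hPbd : ∀ x ∈ Icc (-b) b, |P x| ≤ 2*b*M^2*α := by
    intro x hx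
    have hxl : -b ≤ x := hx.1
    have habs : ∀ a' b' : ℝ, IntervalIntegrable (fun s => |f s|) volume a' b' := fun a' b' =>
      (hfint a' b').abs
    have h1 : |P x| ≤ ∫ s in (-b)..x, |f s| := by
      simpa [Real.norm_eq_abs] using
        intervalIntegral.norm_integral_le_integral_norm (f := f) (a := -b) (b := x) hxl
    have h2 : (∫ s in (-b)..x, |f s|) ≤ ∫ s in (-b)..b, |f s| := by
      have hsplit : (∫ s in (-b)..x, |f s|) + ∫ s in x..b, |f s| = ∫ s in (-b)..b, |f s| :=
        intervalIntegral.integral_add_adjacent_intervals (habs _ _) (habs _ _)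
      have hnn : 0 ≤ ∫ s in x..b, |f s| :=
        intervalIntegral.integral_nonneg hx.2 (fun s _ => abs_nonneg _)
      linarith
    have hz1 : (∫ s in (-b)..(-(b/α)), |f s|) = 0 := by
      rw [intervalIntegral.integral_congr (g := fun _ => 0)]
      · simp
      · intro s hs
        rw [uIcc_of_le (by linarith)] at hs
        have : b / α ≤ |s| := by
          rcases hs with ⟨_, h2⟩
          rw [abs_of_nonpos (by linarith)]; linarith
        simp [hf0 s this]
    have hz2 : (∫ s in (b/α)..b, |f s|) = 0 := by
      rw [intervalIntegral.integral_congr (g := fun _ => 0)]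
      · simp
      · intro s hs
        rw [uIcc_of_le hbale] at hs
        have : b / α ≤ |s| := by
          rw [abs_of_nonneg (by linarith [hs.1])]; exact hs.1
        simp [hf0 s this]
    have hmid : (∫ s in (-(b/α))..(b/α), |f s|) ≤ (b/α - (-(b/α))) * (α ^ 2 * M ^ 2) := by
      have h := intervalIntegral.integral_mono_on (a := -(b/α)) (b := b/α)
        (f := fun s => |f s|) (g := fun _ => α ^ 2 * M ^ 2) (by linarith)
        (habs _ _) (intervalIntegrable_const) (fun s _ => hfbd s)
      simp only [intervalIntegral.integral_const, smul_eq_mul] at h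
      exact h
    have hsplit2 : (∫ s in (-b)..b, |f s|)
        = (∫ s in (-b)..(-(b/α)), |f s|) + ((∫ s in (-(b/α))..(b/α), |f s|)
          + ∫ s in (b/α)..b, |f s|) := by
      rw [intervalIntegral.integral_add_adjacent_intervals (habs _ _) (habs _ _),
        intervalIntegral.integral_add_adjacent_intervals (habs _ _) (habs _ _)]
    have hval : (b/α - (-(b/α))) * (α ^ 2 * M ^ 2) = 2*b*M^2*α := by
      field_simp; ring
    calc |P x| ≤ ∫ s in (-b)..b, |f s| := le_trans h1 h2
      _ = (∫ s in (-(b/α))..(b/α), |f s|) := by rw [hsplit2, hz1, hz2]; ring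
      _ ≤ (b/α - (-(b/α))) * (α ^ 2 * M ^ 2) := hmid
      _ = 2*b*M^2*α := hval
  -- bound for v on the compact interval (for integrability of U * v)
  obtain ⟨Cv, hCv⟩ : ∃ C, ∀ s ∈ Icc (-b) b, |v α s| ≤ C := by
    obtain ⟨C, hC⟩ := (isCompact_Icc (a := -b) (b := b)).exists_bound_of_continuousOn
      hvc.continuousOn
    exact ⟨C, fun s hs => by simpa [Real.norm_eq_abs] using hC s hs⟩
  have hUv : ∀ x ∈ Icc (-b) b, IntervalIntegrable (fun s => U s * v α s) volume (-b) x := by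
    intro x hx
    apply bdd_intervalIntegrable (hUm.mul hvc.measurable) (C := M * Cv)
    intro s hs
    have hs' : s ∈ Icc (-b) b := by
      have := Set.uIoc_subset_uIcc hs
      rw [uIcc_of_le hx.1] at this
      exact ⟨this.1, le_trans this.2 hx.2⟩
    rw [Pi.mul_apply, abs_mul]
    exact mul_le_mul (hU s) (hCv s hs') (abs_nonneg _)
      (le_trans (abs_nonneg _) (hU s))
  -- FTC for v'
  have hFTC : ∀ x ∈ Icc (-b) b,
      v' α x = k α + (∫ s in (-b)..x, U s * v α s) + P x := by
    intro x hx
    have h1 := intervalIntegral.integral_eq_sub_of_hasDerivAt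
      (f := v' α) (f' := fun s => U s * v α s + f s) (a := -b) (b := x)
      (fun s _ => by simpa [hfdef] using hv2 α hα s) ((hUv x hx).add (hfint _ _))
    rw [intervalIntegral.integral_add (hUv x hx) (hfint _ _), hvb1] at h1
    rw [hPdef]
    linarith [h1]
  -- auxiliary functions
  set w : ℝ → ℝ := fun x => v' α x - P x with hwdef
  set φ : ℝ → ℝ := fun s => |v α s| + |w s| with hφdef
  have hφc : Continuous φ := (hvc.abs).add ((hv'c.sub hPc).abs)
  have hφnn : ∀ s, 0 ≤ φ s := fun s => add_nonneg (abs_nonneg _) (abs_nonneg _)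
  set Ψ : ℝ → ℝ := fun x => ∫ s in (-b)..x, φ s with hΨdef
  have hΨd : ∀ x, HasDerivAt Ψ (φ x) x := fun x =>
    intervalIntegral.integral_hasDerivAt_right (hφc.intervalIntegrable _ _)
      ⟨univ, univ_mem, hφc.aestronglyMeasurable.restrict⟩ hφc.continuousAt
  have hΨc : Continuous Ψ :=
    continuous_iff_continuousAt.2 fun x => (hΨd x).continuousAt
  have hΨnn : ∀ x ∈ Icc (-b) b, 0 ≤ Ψ x := fun x hx =>
    intervalIntegral.integral_nonneg hx.1 (fun s _ => hφnn s)
  set A : ℝ := M + 4*b^2*M^2*α with hAdef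
  -- key differential inequality pieces
  have hvbound : ∀ x ∈ Icc (-b) b, |v α x| ≤ Ψ x + 4*b^2*M^2*α := by
    intro x hx
    have h1 := intervalIntegral.integral_eq_sub_of_hasDerivAt
      (f := v α) (f' := v' α) (a := -b) (b := x)
      (fun s _ => hv1 α hα s) (hv'c.intervalIntegrable _ _)
    rw [hvb0, sub_zero] at h1
    have h2 : |v α x| ≤ ∫ s in (-b)..x, |v' α s| := by
      rw [← h1]
      simpa [Real.norm_eq_abs] using
        intervalIntegral.norm_integral_le_integral_norm (f := v' α) (a := -b) (b := x) hx.1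
    have h3 : (∫ s in (-b)..x, |v' α s|) ≤ ∫ s in (-b)..x, (φ s + 2*b*M^2*α) := by
      apply intervalIntegral.integral_mono_on hx.1
        ((hv'c.abs).intervalIntegrable _ _)
        ((hφc.add continuous_const).intervalIntegrable _ _)
      intro s hs
      have hs' : s ∈ Icc (-b) b := ⟨hs.1, le_trans hs.2 hx.2⟩
      have : v' α s = w s + P s := by simp only [hwdef]; ring
      calc |v' α s| ≤ |w s| + |P s| := by rw [this]; exact abs_add_le _ _
        _ ≤ φ s + 2*b*M^2*α := by
            have := hPbd s hs'
            have h4 : |w s| ≤ φ s := by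
              simp only [hφdef]
              exact le_add_of_nonneg_left (abs_nonneg _)
            linarith
    have h4 : (∫ s in (-b)..x, (φ s + 2*b*M^2*α)) = Ψ x + (x - (-b)) * (2*b*M^2*α) := by
      rw [intervalIntegral.integral_add (hφc.intervalIntegrable _ _)
        (intervalIntegrable_const)]
      simp only [hΨdef, intervalIntegral.integral_const, smul_eq_mul]
    have h5 : (x - (-b)) * (2*b*M^2*α) ≤ 4*b^2*M^2*α := by
      have hx2 : x - (-b) ≤ 2*b := by linarith [hx.2]
      have : (0:ℝ) ≤ 2*b*M^2*α := by positivity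
      nlinarith
    linarith
  have hwbound : ∀ x ∈ Icc (-b) b, |w x| ≤ M + M * Ψ x := by
    intro x hx
    have h1 : w x = k α + (∫ s in (-b)..x, U s * v α s) := by
      simp only [hwdef]; rw [hFTC x hx]; ring
    have h2 : |∫ s in (-b)..x, U s * v α s| ≤ ∫ s in (-b)..x, |U s * v α s| := by
      simpa only [Real.norm_eq_abs] using
        intervalIntegral.norm_integral_le_integral_norm
          (f := fun s => U s * v α s) (a := -b) (b := x) (μ := volume) hx.1
    have h3 : (∫ s in (-b)..x, |U s * v α s|) ≤ ∫ s in (-b)..x, M * φ s := by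
      apply intervalIntegral.integral_mono_on hx.1 ((hUv x hx).abs)
        ((continuous_const.mul hφc).intervalIntegrable _ _)
      intro s _
      rw [abs_mul]
      have hφ1 : |v α s| ≤ φ s := by
        simp only [hφdef]; exact le_add_of_nonneg_right (abs_nonneg _)
      calc |U s| * |v α s| ≤ M * |v α s| :=
            mul_le_mul_of_nonneg_right (hU s) (abs_nonneg _)
        _ ≤ M * φ s := mul_le_mul_of_nonneg_left hφ1 hM.le
    have h4 : (∫ s in (-b)..x, M * φ s) = M * Ψ x := by
      simp only [hΨdef]
      exact intervalIntegral.integral_const_mul M φ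
    rw [h1]
    calc |k α + ∫ s in (-b)..x, U s * v α s|
        ≤ |k α| + |∫ s in (-b)..x, U s * v α s| := abs_add_le _ _
      _ ≤ M + M * Ψ x := by
          have := hk α; linarith
  have hkey : ∀ x ∈ Icc (-b) b, φ x ≤ A + (1 + M) * Ψ x := by
    intro x hx
    have h1 := hvbound x hx
    have h2 := hwbound x hx
    simp only [hφdef, hAdef]
    nlinarith [hΨnn x hx]
  -- Gronwall
  have hgron := norm_le_gronwallBound_of_norm_deriv_right_le
    (f := Ψ) (f' := φ) (δ := 0) (K := 1 + M) (ε := A) (a := -b) (b := b)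
    hΨc.continuousOn (fun x _ => (hΨd x).hasDerivWithinAt)
    (by simp [hΨdef, intervalIntegral.integral_same])
    (by
      intro x hx
      have hx' : x ∈ Icc (-b) b := ⟨hx.1, hx.2.le⟩
      rw [Real.norm_eq_abs, Real.norm_eq_abs, abs_of_nonneg (hφnn x),
        abs_of_nonneg (hΨnn x hx')]
      linarith [hkey x hx'])
  have hKne : (1 + M) ≠ 0 := by linarith
  have hφfinal : ∀ x ∈ Icc (-b) b, φ x ≤ A * Real.exp (2*(1+M)*b) := by
    intro x hx
    have hg := hgron x hx
    rw [Real.norm_eq_abs, abs_of_nonneg (hΨnn x hx), gronwallBound_of_K_ne_0 hKne] at hg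
    have hA : 0 ≤ A := by simp only [hAdef]; positivity
    have hΨle : Ψ x ≤ A / (1+M) * (Real.exp ((1+M) * (x - (-b))) - 1) := by
      simpa using hg
    have h1 : φ x ≤ A + (1 + M) * Ψ x := hkey x hx
    have h2 : A + (1 + M) * (A / (1+M) * (Real.exp ((1+M) * (x - (-b))) - 1))
        = A * Real.exp ((1+M) * (x - (-b))) := by
      field_simp; ring
    have h3 : Real.exp ((1+M) * (x - (-b))) ≤ Real.exp (2*(1+M)*b) := by
      apply Real.exp_le_exp.2
      nlinarith [hx.2]
    have hK1 : (0:ℝ) < 1 + M := by linarith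
    calc φ x ≤ A + (1 + M) * Ψ x := h1
      _ ≤ A * Real.exp ((1+M) * (x - (-b))) := by
          rw [← h2]
          have := mul_le_mul_of_nonneg_left hΨle hK1.le
          linarith
      _ ≤ A * Real.exp (2*(1+M)*b) := mul_le_mul_of_nonneg_left h3 hA
  -- conclusion
  intro x hx
  have hφx := hφfinal x hx
  have hAle : A ≤ (M + 4*b^2*M^2) * α := by
    simp only [hAdef]
    nlinarith [hα, hM.le, sq_nonneg b]
  have hEpos := hE
  have hφle : φ x ≤ (M + 4*b^2*M^2) * Real.exp (2*(1+M)*b) * α := by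
    calc φ x ≤ A * Real.exp (2*(1+M)*b) := hφx
      _ ≤ (M + 4*b^2*M^2) * α * Real.exp (2*(1+M)*b) :=
          mul_le_mul_of_nonneg_right hAle hEpos.le
      _ = (M + 4*b^2*M^2) * Real.exp (2*(1+M)*b) * α := by ring
  constructor
  · have h1 : |v α x| ≤ φ x := by
      simp only [hφdef]; exact le_add_of_nonneg_right (abs_nonneg _)
    have h2 : (0:ℝ) ≤ 2*b*M^2*α := by positivity
    calc |v α x| ≤ φ x := h1
      _ ≤ (M + 4*b^2*M^2) * Real.exp (2*(1+M)*b) * α := hφle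
      _ ≤ ((M + 4*b^2*M^2) * Real.exp (2*(1+M)*b) + 2*b*M^2) * α := by nlinarith
  · have h1 : v' α x = w x + P x := by simp only [hwdef]; ring
    have h2 : |w x| ≤ φ x := by
      simp only [hφdef]; exact le_add_of_nonneg_left (abs_nonneg _)
    calc |v' α x| ≤ |w x| + |P x| := by rw [h1]; exact abs_add_le _ _
      _ ≤ φ x + 2*b*M^2*α := add_le_add h2 (hPbd x hx)
      _ ≤ (M + 4*b^2*M^2) * Real.exp (2*(1+M)*b) * α + 2*b*M^2*α := by
          linarith [hφle]
      _ = ((M + 4*b^2*M^2) * Real.exp (2*(1+M)*b) + 2*b*M^2) * α := by ring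
end

section
/- Let V : ℝ → ℝ be bounded, integrable, and continuous at 0, let u : ℝ → ℝ be bounded with u(x) = 1 for x ≤ -b and u(x) = θ for x ≥ b, and let Θ(x) = 1 for x < 0, Θ(x) = θ for x > 0. Assume ∫_{-∞}^0 V dx + θ² ∫_0^∞ V dx = 0. Then for α → 0⁺: ∫_ℝ V(αx) u(x)² dx = α⁻¹ ∫_ℝ V(t)( u(t/α)² - Θ(t)² ) dt, and this tends to V(0) ∫_ℝ (u² - Θ²) dx; more precisely ∫_ℝ V(αx)u(x)² dx = V(0)∫_ℝ (u² - Θ²) dx + o(1) as α → 0. -/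
open MeasureTheory Filter Set
open scoped Topology

/-- Proposition PropV0IntLast: under the balance condition
∫_{ℝ₋}V + θ²∫_{ℝ₊}V = 0, the integral ∫ V(αx)u² dx equals
α⁻¹ ∫ V(t)(u(t/α)² - Θ(t)²) dt and converges to V(0)∫(u² - Θ²) as α → 0⁺,
where Θ = 1 on ℝ₋ and Θ = θ on ℝ₊. -/
theorem stmt_11 (b θ : ℝ) (hb : 0 < b) (V u : ℝ → ℝ)
    (hVm : Measurable V) (hVbd : ∃ C, ∀ x, |V x| ≤ C)
    (hVint : Integrable V) (hVc : ContinuousAt V 0)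
    (hum : Measurable u) (hubd : ∃ C, ∀ x, |u x| ≤ C)
    (huL : ∀ x ≤ -b, u x = 1) (huR : ∀ x ≥ b, u x = θ)
    (hbal : (∫ x in Iio (0:ℝ), V x) + θ ^ 2 * ∫ x in Ioi (0:ℝ), V x = 0) :
    (∀ α > (0:ℝ), ∫ x, V (α * x) * (u x) ^ 2 =
      α⁻¹ * ∫ t, V t * ((u (t / α)) ^ 2 - (if t < 0 then (1:ℝ) else θ) ^ 2)) ∧
    Tendsto (fun α => ∫ x, V (α * x) * (u x) ^ 2) (𝓝[>] (0:ℝ))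
      (𝓝 (V 0 * ∫ x, ((u x) ^ 2 - (if x < 0 then (1:ℝ) else θ) ^ 2))) := by
  obtain ⟨Cv, hCv⟩ := hVbd
  obtain ⟨Cu, hCu⟩ := hubd
  have hCv0 : 0 ≤ Cv := le_trans (abs_nonneg _) (hCv 0)
  have hCu0 : 0 ≤ Cu := le_trans (abs_nonneg _) (hCu 0)
  set Θ : ℝ → ℝ := fun t => if t < 0 then (1:ℝ) else θ with hΘdef
  have hΘm : Measurable Θ :=
    Measurable.ite measurableSet_Iio measurable_const measurable_const
  have hΘbd : ∀ x, |Θ x| ≤ max 1 |θ| := by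
    intro x
    by_cases h : x < 0 <;> simp [Θ, h, le_max_left, le_max_right]
  set M : ℝ := Cu ^ 2 + max 1 |θ| ^ 2 with hMdef
  set w : ℝ → ℝ := fun x => (u x) ^ 2 - (Θ x) ^ 2 with hwdef
  have hwm : Measurable w := (hum.pow_const 2).sub (hΘm.pow_const 2)
  have hwbd : ∀ x, |w x| ≤ M := by
    intro x
    have h1 : |(u x) ^ 2| ≤ Cu ^ 2 := by
      rw [abs_pow]
      exact pow_le_pow_left₀ (abs_nonneg _) (hCu x) 2
    have h2 : |(Θ x) ^ 2| ≤ max 1 |θ| ^ 2 := by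
      rw [abs_pow]
      exact pow_le_pow_left₀ (abs_nonneg _) (hΘbd x) 2
    calc |w x| ≤ |(u x) ^ 2| + |(Θ x) ^ 2| := abs_sub _ _
      _ ≤ M := add_le_add h1 h2
  -- products with bounded measurable functions are integrable
  have key : ∀ (g φ : ℝ → ℝ), Integrable g → Measurable φ → (∃ C, ∀ x, |φ x| ≤ C) →
      Integrable (fun t => g t * φ t) := by
    rintro g φ hg hφ ⟨C, hC⟩
    exact (hg.bdd_mul hφ.aestronglyMeasurable
      (Filter.Eventually.of_forall fun x => by simpa [Real.norm_eq_abs] using hC x)).congr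
      (Filter.Eventually.of_forall fun x => mul_comm _ _)
  have hVΘint : Integrable (fun t => V t * (Θ t) ^ 2) :=
    key V _ hVint (hΘm.pow_const 2)
      ⟨max 1 |θ| ^ 2, fun x => by rw [abs_pow]; exact pow_le_pow_left₀ (abs_nonneg _) (hΘbd x) 2⟩
  -- the balance condition means ∫ V Θ² = 0
  have hzero : ∫ t, V t * (Θ t) ^ 2 = 0 := by
    have hsplit := intervalIntegral.integral_Iio_add_Ici (b := (0:ℝ)) (f := fun t => V t * (Θ t) ^ 2)
      hVΘint.integrableOn hVΘint.integrableOn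
    have h1 : ∫ t in Iio (0:ℝ), V t * (Θ t) ^ 2 = ∫ t in Iio (0:ℝ), V t := by
      apply setIntegral_congr_fun measurableSet_Iio
      intro x hx
      simp [Θ, hx.out]
    have h2 : ∫ t in Ici (0:ℝ), V t * (Θ t) ^ 2 = θ ^ 2 * ∫ t in Ioi (0:ℝ), V t := by
      rw [← integral_Ici_eq_integral_Ioi, ← integral_const_mul]
      apply setIntegral_congr_fun measurableSet_Ici
      intro x hx
      have hx' : ¬ x < 0 := not_lt.2 hx
      simp only [Θ, if_neg hx']
      ring
    rw [h1, h2] at hsplit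
    rw [← hsplit, hbal]
  -- substitution formula
  have hcomp : ∀ α : ℝ, 0 < α → ∀ f : ℝ → ℝ,
      ∫ x, f (α * x) = α⁻¹ * ∫ t, f t := by
    intro α hα f
    rw [MeasureTheory.Measure.integral_comp_mul_left f α, abs_of_pos (inv_pos.2 hα), smul_eq_mul]
  have hΘα : ∀ α : ℝ, 0 < α → ∀ x : ℝ, Θ (α * x) = Θ x := by
    intro α hα x
    by_cases h : x < 0
    · simp [Θ, h, mul_neg_of_pos_of_neg hα h]
    · have h' : ¬ α * x < 0 := not_lt.2 (mul_nonneg hα.le (not_lt.1 h))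
      simp [Θ, h, h']
  -- Part 1
  have part1 : ∀ α > (0:ℝ), ∫ x, V (α * x) * (u x) ^ 2 =
      α⁻¹ * ∫ t, V t * ((u (t / α)) ^ 2 - (Θ t) ^ 2) := by
    intro α hα
    have hI1 : Integrable (fun t => V t * (u (t / α)) ^ 2) :=
      key V _ hVint ((hum.comp (measurable_id.div_const α)).pow_const 2)
        ⟨Cu ^ 2, fun x => by rw [abs_pow]; exact pow_le_pow_left₀ (abs_nonneg _) (hCu _) 2⟩
    have hsub : ∫ x, V (α * x) * (u x) ^ 2 = α⁻¹ * ∫ t, V t * (u (t / α)) ^ 2 := by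
      have h := hcomp α hα (fun t => V t * (u (t / α)) ^ 2)
      simpa [mul_div_cancel_left₀ _ hα.ne'] using h
    rw [hsub]
    congr 1
    have : ∫ t, V t * ((u (t / α)) ^ 2 - (Θ t) ^ 2)
        = ∫ t, (V t * (u (t / α)) ^ 2 - V t * (Θ t) ^ 2) := by
      congr 1; funext t; ring
    rw [this, integral_sub hI1 hVΘint, hzero, sub_zero]
  -- Part 2: reduce to the compactly supported part
  have hsplit2 : ∀ α > (0:ℝ), ∫ x, V (α * x) * (u x) ^ 2 = ∫ x, V (α * x) * w x := by
    intro α hα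
    have hVα : Integrable (fun x => V (α * x)) := hVint.comp_mul_left' hα.ne'
    have hA : Integrable (fun x => V (α * x) * w x) :=
      key _ _ hVα hwm ⟨M, hwbd⟩
    have hB : Integrable (fun x => V (α * x) * (Θ x) ^ 2) :=
      key _ _ hVα (hΘm.pow_const 2)
        ⟨max 1 |θ| ^ 2, fun x => by rw [abs_pow]; exact pow_le_pow_left₀ (abs_nonneg _) (hΘbd x) 2⟩
    have h1 : ∫ x, V (α * x) * (u x) ^ 2
        = ∫ x, (V (α * x) * w x + V (α * x) * (Θ x) ^ 2) := by
      congr 1; funext x; simp only [w]; ring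
    rw [h1, integral_add hA hB]
    have h2 : ∫ x, V (α * x) * (Θ x) ^ 2 = 0 := by
      have h := hcomp α hα (fun t => V t * (Θ t) ^ 2)
      have heq : (fun x => V (α * x) * (Θ (α * x)) ^ 2) = fun x => V (α * x) * (Θ x) ^ 2 := by
        funext x; rw [hΘα α hα x]
      rw [heq] at h
      rw [h, hzero, mul_zero]
    rw [h2, add_zero]
  -- w vanishes outside [-b, b]
  have hwzero : ∀ x : ℝ, x ∉ Icc (-b) b → w x = 0 := by
    intro x hx
    rw [mem_Icc, not_and_or, not_le, not_le] at hx
    rcases hx with hx | hx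
    · have hu : u x = 1 := huL x hx.le
      have hΘx : Θ x = 1 := by
        have : x < 0 := lt_of_lt_of_le hx (by linarith)
        simp [Θ, this]
      simp [w, hu, hΘx]
    · have hu : u x = θ := huR x hx.le
      have hΘx : Θ x = θ := by
        have : ¬ x < 0 := not_lt.2 (le_of_lt (lt_of_le_of_lt hb.le hx))
        simp [Θ, this]
      simp [w, hu, hΘx]
  -- dominated convergence
  have hbound_int : Integrable ((Icc (-b) b).indicator (fun _ => Cv * M)) := by
    rw [integrable_indicator_iff measurableSet_Icc]
    exact integrableOn_const measure_Icc_lt_top.ne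
  have hT : Tendsto (fun α => ∫ x, V (α * x) * w x) (𝓝[>] (0:ℝ))
      (𝓝 (∫ x, V 0 * w x)) := by
    apply tendsto_integral_filter_of_dominated_convergence
      ((Icc (-b) b).indicator (fun _ => Cv * M))
    · filter_upwards with α
      exact ((hVm.comp (measurable_const.mul measurable_id)).mul hwm).aestronglyMeasurable
    · filter_upwards with α
      filter_upwards with x
      by_cases hx : x ∈ Icc (-b) b
      · rw [indicator_of_mem hx]
        calc ‖V (α * x) * w x‖ = |V (α * x)| * |w x| := abs_mul _ _
          _ ≤ Cv * M := mul_le_mul (hCv _) (hwbd x) (abs_nonneg _) hCv0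
      · rw [indicator_of_notMem hx, hwzero x hx]
        simp
    · exact hbound_int
    · filter_upwards with x
      have h1 : Tendsto (fun α : ℝ => α * x) (𝓝[>] (0:ℝ)) (𝓝 0) := by
        have : Tendsto (fun α : ℝ => α * x) (𝓝 (0:ℝ)) (𝓝 (0 * x)) :=
          (continuous_id.mul continuous_const).tendsto 0
        rw [zero_mul] at this
        exact this.mono_left nhdsWithin_le_nhds
      exact (hVc.tendsto.comp h1).mul tendsto_const_nhds
  refine ⟨part1, ?_⟩
  have hfinal : (∫ x, V 0 * w x) = V 0 * ∫ x, w x := integral_const_mul _ _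
  rw [hfinal] at hT
  exact hT.congr' (eventually_mem_nhdsWithin.mono fun α hα => (hsplit2 α hα).symm)
end
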